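/- Any optimal solution of the AUGMECON scalarized problem max f₁(x) + eps·Σ_{k=2}^p s_k/r_k subject to f_k(x) − s_k = e_k, s_k ≥ 0, x ∈ X, with eps > 0 and r_k > 0, is Pareto optimal for the multi-objective problem of maximizing (f₁,…,f_p) over X. -/

import Mathlib

/-! If `x` dominated `x*`, the slacks `s k = f k x - e k` would be feasible and pointwise at
least `s*`, so the augmented objective at `(x, s)` would strictly exceed its value at `(x*, s*)`:
either `f₁` improves, or some slack grows, and `eps > 0`, `r k > 0` turn that into a strict gain. -/

lemma strictMono_sum_div {K : Type*} [Fintype K] {r : K → ℝ} (hr : ∀ k, 0 < r k) :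
    StrictMono fun s : K → ℝ => ∑ k, s k / r k := by
  intro s t hst
  obtain ⟨hle, k₀, hlt⟩ := Pi.lt_def.mp hst
  exact Finset.sum_lt_sum (fun k _ => div_le_div_of_nonneg_right (hle k) (hr k).le)
    ⟨k₀, Finset.mem_univ k₀, div_lt_div_of_pos_right hlt (hr k₀)⟩

lemma add_mul_lt_add_mul_of_le_of_le {a b u v c : ℝ} (hc : 0 < c) (hab : a ≤ b) (huv : u ≤ v)
    (hstrict : a < b ∨ u < v) : a + c * u < b + c * v := by
  rcases hstrict with h | h
  · linarith [mul_le_mul_of_nonneg_left huv hc.le]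
  · linarith [mul_lt_mul_of_pos_left h hc]

theorem stmt2_general {X : Type*} {K : Type*} [Fintype K]
    (f1 : X → ℝ) (f : K → X → ℝ) (e : K → ℝ) (r : K → ℝ) (eps : ℝ)
    (hr : ∀ k, 0 < r k) (heps : 0 < eps)
    (xstar : X) (sstar : K → ℝ)
    (hfeas : (∀ k, f k xstar - sstar k = e k) ∧ (∀ k, 0 ≤ sstar k))
    (hopt : ∀ (x : X) (s : K → ℝ),
      (∀ k, f k x - s k = e k) → (∀ k, 0 ≤ s k) →
      f1 x + eps * ∑ k, s k / r k ≤ f1 xstar + eps * ∑ k, sstar k / r k) :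
    ¬ ∃ x : X, (f1 xstar ≤ f1 x ∧ ∀ k, f k xstar ≤ f k x) ∧
      (f1 xstar < f1 x ∨ ∃ k, f k xstar < f k x) := by
  rintro ⟨x, ⟨hf1, hf⟩, hstrict⟩
  obtain ⟨hsstar, hsstar_nonneg⟩ := hfeas
  set s : K → ℝ := fun k => f k x - e k
  have hss : ∀ k, sstar k - s k = f k xstar - f k x := fun k => by
    linarith [hsstar k]
  have hle : sstar ≤ s := fun k => by linarith [hss k, hf k]
  have hslack : f1 xstar < f1 x ∨ sstar < s := by
    refine hstrict.imp id fun ⟨k, hk⟩ => Pi.lt_def.mpr ⟨hle, k, ?_⟩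
    linarith [hss k]
  have hgain := add_mul_lt_add_mul_of_le_of_le heps hf1
    ((strictMono_sum_div hr).monotone hle) (hslack.imp id (strictMono_sum_div hr ·))
  have hbound := hopt x s (fun k => sub_sub_cancel _ _)
    (fun k => (hsstar_nonneg k).trans (hle k))
  exact hgain.not_ge hbound

/-- Any optimal solution of the AUGMECON scalarized problem
`max f₁(x) + eps·Σ_k s_k / r_k` subject to `f_k(x) − s_k = e_k`, `s_k ≥ 0`,
with `eps > 0` and `r_k > 0`, is Pareto optimal for maximizing `(f₁, …, f_p)`. -/
theorem stmt2 {X : Type*} [Nonempty X] {K : Type*} [Fintype K]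
    (f1 : X → ℝ) (f : K → X → ℝ) (e : K → ℝ) (r : K → ℝ) (eps : ℝ)
    (hr : ∀ k, 0 < r k) (heps : 0 < eps)
    (xstar : X) (sstar : K → ℝ)
    (hfeas : (∀ k, f k xstar - sstar k = e k) ∧ (∀ k, 0 ≤ sstar k))
    (hopt : ∀ (x : X) (s : K → ℝ),
      (∀ k, f k x - s k = e k) → (∀ k, 0 ≤ s k) →
      f1 x + eps * ∑ k, s k / r k ≤ f1 xstar + eps * ∑ k, sstar k / r k) :
    ¬ ∃ x : X, (f1 xstar ≤ f1 x ∧ ∀ k, f k xstar ≤ f k x) ∧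
      (f1 xstar < f1 x ∨ ∃ k, f k xstar < f k x) :=
  stmt2_general f1 f e r eps hr heps xstar sstar hfeas hopt
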